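/- arXiv:2604.19220 — 5 statements merged into one kernel-verified Lean document; each statement's English description precedes it below -/
import Mathlib

section
/- For every n ≥ 1 and every 1 ≤ k ≤ n, the break point a_{n,k} admits the probabilistic representation a_{n,k} = φ_n(P(x_n ≤ k − 1)), where φ_n(x) = a_{n,0} + l_n x. -/
open MeasureTheory Filter Set
open scoped ENNReal

/-!
Write `F n k = P(x_n < k)`. The variables of step `n + 1` are independent of `x_n`, which is a
function of the earlier steps, so conditioning on `ε_{n+1}` (and, when it is `0`, on
`Y_{n+1,k}`) gives, with `r = l_n / l_{n+1}` and `p = p_{n+1,k}`,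
`F (n+1) k = (1 - r)(1 - q_{n+1}) + r (p F n (k-1) + (1 - p) F n k)`.
Multiplied by `l_{n+1}`, and using `(l_{n+1} - l_n)(1 - q_{n+1}) = a_{n,0} - a_{n+1,0}`, this is the
recursion of the break points, and both sides agree at `k = 0` and `k = n + 1`.
-/

/-- The auxiliary Markov chain: `x_0 = 0` and
`x_n = n ε_n ν_n + (1 - ε_n)(x_{n-1} + Y_{n, x_{n-1}+1})`. -/
def xProc {Ω : Type*} (Y : ℕ → ℕ → Ω → ℕ) (ν ε : ℕ → Ω → ℕ) : ℕ → Ω → ℕ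
  | 0 => fun _ => 0
  | n + 1 => fun ω =>
      (n + 1) * ε (n + 1) ω * ν (n + 1) ω +
        (1 - ε (n + 1) ω) * (xProc Y ν ε n ω + Y (n + 1) (xProc Y ν ε n ω + 1) ω)

namespace ProbabilityTheory

variable {Ω : Type*} {mΩ : MeasurableSpace Ω} {μ : Measure Ω}

lemma Indep.measureReal_inter {m₁ m₂ : MeasurableSpace Ω} (h : Indep m₁ m₂ μ) {s t : Set Ω}
    (hs : MeasurableSet[m₁] s) (ht : MeasurableSet[m₂] t) :
    μ.real (s ∩ t) = μ.real s * μ.real t := by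
  simp only [measureReal_def, (Indep_iff m₁ m₂ μ).1 h s t hs ht, ENNReal.toReal_mul]

end ProbabilityTheory

lemma measureReal_setOf_eq_zero_of_le_one {Ω : Type*} [MeasurableSpace Ω] {μ : Measure Ω}
    [IsProbabilityMeasure μ] {g : Ω → ℕ} (hg : Measurable g) (hg_le : ∀ ω, g ω ≤ 1) :
    μ.real {ω | g ω = 0} = 1 - μ.real {ω | g ω = 1} := by
  have h : {ω | g ω = 0} = {ω | g ω = 1}ᶜ := by
    ext ω
    show g ω = 0 ↔ ¬g ω = 1
    have := hg_le ω
    omega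
  rw [h]
  exact probReal_compl_eq_one_sub (hg (measurableSet_singleton 1))

section Breakpoints

variable {a : ℕ → ℕ → ℝ} {l : ℕ → ℝ}

lemma monotone_length (ha_anti : Antitone fun n => a n 0)
    (ha_mono : Monotone fun n => a n (n + 1)) (hl : ∀ n, l n = a n (n + 1) - a n 0) :
    Monotone l := by
  intro m n h
  rw [hl, hl]
  exact sub_le_sub (ha_mono h) (ha_anti h)

lemma mul_length_succ_sub_eq {q : ℕ → ℝ} (ha_anti : Antitone fun n => a n 0)
    (ha_mono : Monotone fun n => a n (n + 1)) (hl : ∀ n, l n = a n (n + 1) - a n 0)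
    (hq : ∀ n : ℕ, 1 ≤ n → l (n - 1) < l n →
      q n = (a n (n + 1) - a (n - 1) n) / (l n - l (n - 1))) (n : ℕ) :
    q (n + 1) * (l (n + 1) - l n) = a (n + 1) (n + 2) - a n (n + 1) := by
  rcases (monotone_length ha_anti ha_mono hl n.le_succ).eq_or_lt with h | h
  · have h₀ : a (n + 1) 0 ≤ a n 0 := ha_anti n.le_succ
    have h₁ : a n (n + 1) ≤ a (n + 1) (n + 2) := ha_mono n.le_succ
    have hl' : l (n + 1) = a (n + 1) (n + 2) - a (n + 1) 0 := hl (n + 1)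
    rw [← h, sub_self, mul_zero]
    linarith [hl n]
  · rw [hq (n + 1) n.succ_pos (by simpa using h), Nat.add_sub_cancel,
      div_mul_cancel₀ _ (sub_ne_zero.2 h.ne')]

theorem eq_add_length_mul_of_recursion {p F : ℕ → ℕ → ℝ} {q : ℕ → ℝ}
    (harec : ∀ n j, j ≤ n →
      a (n + 1) (j + 1) = p (n + 1) (j + 1) * a n j + (1 - p (n + 1) (j + 1)) * a n (j + 1))
    (hl : ∀ n, l n = a n (n + 1) - a n 0) (hl_ne : ∀ n, l n ≠ 0)
    (hq : ∀ n, q (n + 1) * (l (n + 1) - l n) = a (n + 1) (n + 2) - a n (n + 1))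
    (hF_zero : ∀ n, F n 0 = 0) (hF_top : ∀ n, F n (n + 1) = 1)
    (hF : ∀ n j, j ≤ n → F (n + 1) (j + 1) = (1 - l n / l (n + 1)) * (1 - q (n + 1)) +
      l n / l (n + 1) * (p (n + 1) (j + 1) * F n j + (1 - p (n + 1) (j + 1)) * F n (j + 1))) :
    ∀ n k, k ≤ n + 1 → a n k = a n 0 + l n * F n k := by
  have h_zero : ∀ n, a n 0 = a n 0 + l n * F n 0 := fun n => by simp [hF_zero]
  have h_top : ∀ n, a n (n + 1) = a n 0 + l n * F n (n + 1) := fun n => by rw [hF_top, hl]; ring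
  intro n
  induction n with
  | zero =>
    intro k hk
    obtain rfl | rfl : k = 0 ∨ k = 1 := by omega
    exacts [h_zero 0, h_top 0]
  | succ n ih =>
    intro k hk
    rcases k with _ | j
    · exact h_zero (n + 1)
    obtain hj | rfl : j ≤ n ∨ j = n + 1 := by omega
    swap
    · exact h_top (n + 1)
    have hr : l (n + 1) * (l n / l (n + 1)) = l n := mul_div_cancel₀ _ (hl_ne (n + 1))
    rw [harec n j hj, ih j (by omega), ih (j + 1) (by omega), hF n j hj]
    have hl' : l (n + 1) = a (n + 1) (n + 2) - a (n + 1) 0 := hl (n + 1)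
    linear_combination (1 - q (n + 1) - p (n + 1) (j + 1) * F n j -
      (1 - p (n + 1) (j + 1)) * F n (j + 1)) * hr + hq n + hl n - hl'

end Breakpoints

section BernoulliChain

open ProbabilityTheory

variable {Ω : Type*} (Y : ℕ → ℕ → Ω → ℕ) (ν ε : ℕ → Ω → ℕ)

def bernoulliFamily : (ℕ × ℕ) ⊕ ℕ ⊕ ℕ → Ω → ℕ :=
  Sum.elim (fun nk : ℕ × ℕ => Y nk.1 nk.2) (Sum.elim ν ε)

-- `Y n k`, `ν n` and `ε n` are used in step `n` of the chain.
def stage : (ℕ × ℕ) ⊕ ℕ ⊕ ℕ → ℕ := Sum.elim Prod.fst (Sum.elim id id)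

abbrev familySigma (I : Set ((ℕ × ℕ) ⊕ ℕ ⊕ ℕ)) : MeasurableSpace Ω :=
  ⨆ i ∈ I, MeasurableSpace.comap (bernoulliFamily Y ν ε i) inferInstance

variable {Y ν ε}

lemma measurable_bernoulliFamily_familySigma {I : Set ((ℕ × ℕ) ⊕ ℕ ⊕ ℕ)}
    {i : (ℕ × ℕ) ⊕ ℕ ⊕ ℕ} (hi : i ∈ I) :
    Measurable[familySigma Y ν ε I] (bernoulliFamily Y ν ε i) :=
  Measurable.of_comap_le <| le_iSup₂
    (f := fun i (_ : i ∈ I) => MeasurableSpace.comap (bernoulliFamily Y ν ε i) _) i hi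

lemma familySigma_mono : Monotone (familySigma Y ν ε) :=
  fun _ _ h => biSup_mono fun _ hi => h hi

lemma indep_familySigma {mΩ : MeasurableSpace Ω} {μ : Measure Ω}
    (hmeas : ∀ i, Measurable (bernoulliFamily Y ν ε i))
    (hindep : iIndepFun (bernoulliFamily Y ν ε) μ)
    {I J : Set ((ℕ × ℕ) ⊕ ℕ ⊕ ℕ)} (hIJ : Disjoint I J) :
    Indep (familySigma Y ν ε I) (familySigma Y ν ε J) μ :=
  indep_iSup_of_disjoint (fun i => (hmeas i).comap_le) ((iIndepFun_iff_iIndep _ _ _).1 hindep)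
    hIJ

lemma measurable_xProc_familySigma (n : ℕ) :
    Measurable[familySigma Y ν ε (stage ⁻¹' Iic n)] (xProc Y ν ε n) := by
  induction n with
  | zero => exact measurable_const
  | succ n ih =>
    let m := familySigma Y ν ε (stage ⁻¹' Iic (n + 1))
    have hε : Measurable[m] (ε (n + 1)) :=
      measurable_bernoulliFamily_familySigma (i := .inr (.inr (n + 1)))
        (mem_preimage.2 self_mem_Iic)
    have hν : Measurable[m] (ν (n + 1)) :=
      measurable_bernoulliFamily_familySigma (i := .inr (.inl (n + 1)))
        (mem_preimage.2 self_mem_Iic)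
    have hY : ∀ k, Measurable[m] (Y (n + 1) k) := fun k =>
      measurable_bernoulliFamily_familySigma (i := .inl (n + 1, k))
        (mem_preimage.2 self_mem_Iic)
    have hx : Measurable[m] (xProc Y ν ε n) :=
      ih.mono (familySigma_mono (preimage_mono (Iic_subset_Iic.2 n.le_succ))) le_rfl
    have hYx : Measurable[m] fun ω => Y (n + 1) (xProc Y ν ε n ω + 1) ω :=
      (measurable_from_prod_countable_left (f := fun q : Ω × ℕ => Y (n + 1) (q.2 + 1) q.1)
        fun k => hY (k + 1)).comp (measurable_id.prodMk hx)
    exact ((measurable_const.mul hε).mul hν).add ((measurable_const.sub hε).mul (hx.add hYx))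

section Bounded

variable (hY_le : ∀ n k ω, Y n k ω ≤ 1) (hν_le : ∀ n ω, ν n ω ≤ 1) (hε_le : ∀ n ω, ε n ω ≤ 1)
include hY_le hν_le hε_le

lemma xProc_le (n : ℕ) (ω : Ω) : xProc Y ν ε n ω ≤ n := by
  induction n with
  | zero => exact le_rfl
  | succ n ih =>
    have hY := hY_le (n + 1) (xProc Y ν ε n ω + 1) ω
    simp only [xProc]
    rcases Nat.le_one_iff_eq_zero_or_eq_one.1 (hε_le (n + 1) ω) with he | he <;>
    rcases Nat.le_one_iff_eq_zero_or_eq_one.1 (hν_le (n + 1) ω) with hv | hv <;>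
    simp only [he, hv] <;> omega

-- On `{ε (n + 1) = 0}` the random index `x_n + 1` of `Y` may be replaced by `j + 1`: the value
-- of `Y` only matters when `x_n = j`.
lemma setOf_xProc_succ_lt {n j : ℕ} (hj : j ≤ n) :
    {ω | xProc Y ν ε (n + 1) ω < j + 1} =
      ({ω | ε (n + 1) ω = 1} ∩ {ω | ν (n + 1) ω = 0}) ∪
      (({ω | ε (n + 1) ω = 0} ∩ {ω | Y (n + 1) (j + 1) ω = 1}) ∩ {ω | xProc Y ν ε n ω < j}) ∪
      (({ω | ε (n + 1) ω = 0} ∩ {ω | Y (n + 1) (j + 1) ω = 0}) ∩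
        {ω | xProc Y ν ε n ω < j + 1}) := by
  ext ω
  simp only [mem_union, mem_inter_iff, mem_ofPred_eq, xProc]
  have hY := hY_le (n + 1) (j + 1) ω
  have hYx := hY_le (n + 1) (xProc Y ν ε n ω + 1) ω
  rcases Nat.le_one_iff_eq_zero_or_eq_one.1 (hε_le (n + 1) ω) with he | he <;>
  rcases Nat.le_one_iff_eq_zero_or_eq_one.1 (hν_le (n + 1) ω) with hv | hv <;>
  rw [he, hv] <;>
  rcases lt_trichotomy (xProc Y ν ε n ω) j with h | rfl | h <;> omega

lemma measureReal_xProc_succ_lt {mΩ : MeasurableSpace Ω} {μ : Measure Ω}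
    [IsProbabilityMeasure μ]
    (hmeas : ∀ i, Measurable (bernoulliFamily Y ν ε i))
    (hindep : iIndepFun (bernoulliFamily Y ν ε) μ)
    {n j : ℕ} (hj : j ≤ n) :
    μ.real {ω | xProc Y ν ε (n + 1) ω < j + 1} =
      μ.real {ω | ε (n + 1) ω = 1} * (1 - μ.real {ω | ν (n + 1) ω = 1}) +
      (1 - μ.real {ω | ε (n + 1) ω = 1}) *
        (μ.real {ω | Y (n + 1) (j + 1) ω = 1} * μ.real {ω | xProc Y ν ε n ω < j} +
          (1 - μ.real {ω | Y (n + 1) (j + 1) ω = 1}) * μ.real {ω | xProc Y ν ε n ω < j + 1}) := by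
  let iε : (ℕ × ℕ) ⊕ ℕ ⊕ ℕ := .inr (.inr (n + 1))
  let iν : (ℕ × ℕ) ⊕ ℕ ⊕ ℕ := .inr (.inl (n + 1))
  let iY : (ℕ × ℕ) ⊕ ℕ ⊕ ℕ := .inl (n + 1, j + 1)
  have hε (I) (hI : iε ∈ I) (c : ℕ) :
      MeasurableSet[familySigma Y ν ε I] {ω | ε (n + 1) ω = c} :=
    measurable_bernoulliFamily_familySigma hI (measurableSet_singleton c)
  have hν (I) (hI : iν ∈ I) (c : ℕ) :
      MeasurableSet[familySigma Y ν ε I] {ω | ν (n + 1) ω = c} :=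
    measurable_bernoulliFamily_familySigma hI (measurableSet_singleton c)
  have hY (I) (hI : iY ∈ I) (c : ℕ) :
      MeasurableSet[familySigma Y ν ε I] {ω | Y (n + 1) (j + 1) ω = c} :=
    measurable_bernoulliFamily_familySigma hI (measurableSet_singleton c)
  have hx (k : ℕ) :
      MeasurableSet[familySigma Y ν ε (stage ⁻¹' Iic n)] {ω | xProc Y ν ε n ω < k} :=
    measurable_xProc_familySigma n measurableSet_Iio
  have hεν := indep_familySigma hmeas hindep (I := {iε}) (J := {iν}) (by simp [iε, iν])
  have hεY := indep_familySigma hmeas hindep (I := {iε}) (J := {iY}) (by simp [iε, iY])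
  let current := stage ⁻¹' {n + 1}
  have hpast := indep_familySigma hmeas hindep (I := current) (J := stage ⁻¹' Iic n)
    (Disjoint.preimage _ (by simp))
  have hle (I) : familySigma Y ν ε I ≤ mΩ := iSup₂_le fun i _ => (hmeas i).comap_le
  have hpiece (c k : ℕ) : MeasurableSet
      ({ω | ε (n + 1) ω = 0} ∩ {ω | Y (n + 1) (j + 1) ω = c} ∩ {ω | xProc Y ν ε n ω < k}) :=
    (hle _ _ ((hε current rfl 0).inter (hY current rfl c))).inter (hle _ _ (hx k))
  rw [setOf_xProc_succ_lt hY_le hν_le hε_le hj, measureReal_union, measureReal_union,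
    hεν.measureReal_inter (hε {iε} rfl 1) (hν {iν} rfl 0),
    hpast.measureReal_inter ((hε current rfl 0).inter (hY current rfl 1)) (hx j),
    hpast.measureReal_inter ((hε current rfl 0).inter (hY current rfl 0)) (hx (j + 1)),
    hεY.measureReal_inter (hε {iε} rfl 0) (hY {iY} rfl 1),
    hεY.measureReal_inter (hε {iε} rfl 0) (hY {iY} rfl 0),
    measureReal_setOf_eq_zero_of_le_one (g := ε (n + 1)) (hmeas iε) (hε_le (n + 1)),
    measureReal_setOf_eq_zero_of_le_one (g := ν (n + 1)) (hmeas iν) (hν_le (n + 1)),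
    measureReal_setOf_eq_zero_of_le_one (g := Y (n + 1) (j + 1)) (hmeas iY)
      (hY_le (n + 1) (j + 1))]
  · ring
  · exact disjoint_left.2 fun ω h₁ h₂ => by
      simp only [mem_inter_iff, mem_ofPred_eq] at h₁ h₂; omega
  · exact hpiece 1 j
  · exact disjoint_left.2 fun ω h₁ h₂ => by
      simp only [mem_union, mem_inter_iff, mem_ofPred_eq] at h₁ h₂; omega
  · exact hpiece 0 (j + 1)

end Bounded

end BernoulliChain

/-- **Probabilistic representation of the break points:** for all `n ≥ 1` and `1 ≤ k ≤ n`,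
`a_{n,k} = φ_n(P(x_n ≤ k-1))` where `φ_n(x) = a_{n,0} + l_n x`. -/
theorem breakpoint_representation
    {Ω : Type*} [MeasurableSpace Ω] (ℙ : Measure Ω) [IsProbabilityMeasure ℙ]
    (p : ℕ → ℕ → ℝ) (hp : ∀ n k, p n k ∈ Icc (0:ℝ) 1)
    (a : ℕ → ℕ → ℝ)
    (ha_anti : Antitone fun n => a n 0)
    (ha_mono : Monotone fun n => a n (n + 1))
    (ha_pos : a 0 0 < a 0 1)
    (harec : ∀ n : ℕ, 1 ≤ n → ∀ k : ℕ, 1 ≤ k → k ≤ n →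
      a n k = p n k * a (n - 1) (k - 1) + (1 - p n k) * a (n - 1) k)
    (l : ℕ → ℝ) (hl : ∀ n, l n = a n (n + 1) - a n 0)
    (qseq : ℕ → ℝ) (hq_mem : ∀ n, qseq n ∈ Icc (0:ℝ) 1)
    (hq_def : ∀ n : ℕ, 1 ≤ n → l (n - 1) < l n →
      qseq n = (a n (n + 1) - a (n - 1) n) / (l n - l (n - 1)))
    -- the Bernoulli random variables
    (Y : ℕ → ℕ → Ω → ℕ) (ν ε : ℕ → Ω → ℕ)
    (hY_le : ∀ n k ω, Y n k ω ≤ 1) (hν_le : ∀ n ω, ν n ω ≤ 1) (hε_le : ∀ n ω, ε n ω ≤ 1)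
    (hY_meas : ∀ n k, Measurable (Y n k)) (hν_meas : ∀ n, Measurable (ν n))
    (hε_meas : ∀ n, Measurable (ε n))
    (hY_dist : ∀ n k, ℙ {ω | Y n k ω = 1} = ENNReal.ofReal (p n k))
    (hν_dist : ∀ n, ℙ {ω | ν n ω = 1} = ENNReal.ofReal (qseq n))
    (hε_dist : ∀ n : ℕ, 1 ≤ n →
      ℙ {ω | ε n ω = 1} = ENNReal.ofReal (1 - l (n - 1) / l n))
    -- joint independence of the whole family
    (hindep : ProbabilityTheory.iIndepFun
      (Sum.elim (fun nk : ℕ × ℕ => Y nk.1 nk.2) (Sum.elim ν ε)) ℙ) :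
    ∀ n : ℕ, 1 ≤ n → ∀ k : ℕ, 1 ≤ k → k ≤ n →
      a n k = a n 0 + l n * (ℙ {ω | xProc Y ν ε n ω ≤ k - 1}).toReal := by
  have hl_mono := monotone_length ha_anti ha_mono hl
  have hl_pos (n : ℕ) : 0 < l n :=
    (by rw [hl]; linarith : 0 < l 0).trans_le (hl_mono n.zero_le)
  have hmeas : ∀ i, Measurable (bernoulliFamily Y ν ε i) := by
    rintro (⟨n, k⟩ | n | n)
    exacts [hY_meas n k, hν_meas n, hε_meas n]
  have hε_real (n : ℕ) : ℙ.real {ω | ε (n + 1) ω = 1} = 1 - l n / l (n + 1) := by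
    rw [measureReal_def, hε_dist (n + 1) n.succ_pos, Nat.add_sub_cancel, ENNReal.toReal_ofReal]
    exact sub_nonneg.2 ((div_le_one (hl_pos _)).2 (hl_mono n.le_succ))
  have hν_real (n : ℕ) : ℙ.real {ω | ν n ω = 1} = qseq n := by
    rw [measureReal_def, hν_dist, ENNReal.toReal_ofReal (hq_mem n).1]
  have hY_real (n k : ℕ) : ℙ.real {ω | Y n k ω = 1} = p n k := by
    rw [measureReal_def, hY_dist, ENNReal.toReal_ofReal (hp n k).1]
  have key := eq_add_length_mul_of_recursion (F := fun n k => ℙ.real {ω | xProc Y ν ε n ω < k})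
    (fun n j hj => by simpa using harec (n + 1) n.succ_pos (j + 1) j.succ_pos (by omega)) hl
    (fun n => (hl_pos n).ne') (mul_length_succ_sub_eq ha_anti ha_mono hl hq_def) (fun n => by simp)
    (fun n => by simp [Nat.lt_succ_of_le (xProc_le hY_le hν_le hε_le n _)])
    (fun n j hj => by
      rw [measureReal_xProc_succ_lt hY_le hν_le hε_le hmeas hindep hj, hε_real, hν_real, hY_real]
      ring)
  intro n _ k hk hkn
  simp_rw [key n k (by omega), Nat.lt_iff_le_pred hk]
  rfl
end

section
/- Assume 0 < c < ∞ and that there exists an increasing function L : [0,∞) → [0,∞) with L(n) = l_n for all n ∈ ℕ and L(tx)/L(t) → x^c as t → ∞ for every x > 0. Then L(τ_n)/L(n) converges in distribution to the uniform distribution on [0,1]; equivalently, for every t ∈ (0,1), P(L(τ_n)/L(n) ≤ t) → t as n → ∞. -/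
/-!
By independence, `τ_n ≤ m` is the event that none of `ε_{m+1}, …, ε_n` equals `1`, whose
probability telescopes to `l_m / l_n`. Hence `P(L(τ_n) ≤ t L(n)) = l_m / l_n ≤ t` for the largest `m ≤ n` with `l_m ≤ t l_n`.
Conversely, for `a < z < y < t`, regular variation gives `a L(n) < L(n z^{1/c})` and
`L(n y^{1/c}) < t L(n)` for large `n`; once the interval `[n z^{1/c}, n y^{1/c}]` has length at
least one it contains an integer `k`, and then `a < l_k / l_n ≤ P(L(τ_n) ≤ t L(n))`.
-/

open MeasureTheory Filter Set
open scoped ENNReal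

/-- `τ_n = max {k ≤ n : ε_k = 1}`, with `τ_n = 0` if no such `k` exists. -/
def tauProc {Ω : Type*} (ε : ℕ → Ω → ℕ) (n : ℕ) (ω : Ω) : ℕ :=
  ((Finset.Icc 1 n).filter fun k => ε k ω = 1).sup id

open Topology

theorem Finset.prod_Ico_div_succ {G : Type*} [CommGroupWithZero G] (f : ℕ → G)
    (hf : ∀ k, f k ≠ 0) {m n : ℕ} (hmn : m ≤ n) :
    ∏ k ∈ Finset.Ico m n, f k / f (k + 1) = f m / f n := by
  induction n, hmn using Nat.le_induction with
  | base => simp [hf m]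
  | succ n hmn ih => rw [Finset.prod_Ico_succ_top hmn, ih, div_mul_div_cancel₀ (hf n)]

section tauProc

variable {Ω : Type*} (ε : ℕ → Ω → ℕ) (n : ℕ) (ω : Ω)

lemma tauProc_le : tauProc ε n ω ≤ n :=
  Finset.sup_le fun _ hk => (Finset.mem_Icc.1 (Finset.mem_filter.1 hk).1).2

lemma tauProc_le_iff {m : ℕ} :
    tauProc ε n ω ≤ m ↔ ∀ k ∈ Finset.Ico m n, ε (k + 1) ω ≠ 1 := by
  simp only [tauProc, Finset.sup_le_iff, Finset.mem_filter, Finset.mem_Icc, Finset.mem_Ico, id]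
  constructor
  · intro h k _ h1
    have := h (k + 1) ⟨⟨by omega, by omega⟩, h1⟩
    omega
  · rintro h k ⟨⟨hk1, hkn⟩, h1⟩
    by_contra! hmk
    exact h (k - 1) ⟨by omega, by omega⟩ (by rwa [Nat.sub_add_cancel hk1])

end tauProc

section Distribution

variable {Ω : Type*} [MeasurableSpace Ω] {μ : Measure Ω} {l : ℕ → ℝ}

lemma measureReal_ne_one [IsProbabilityMeasure μ] {ε : ℕ → Ω → ℕ} (hl_pos : ∀ n, 0 < l n)
    (hl_mono : Monotone l) (hε_meas : ∀ n, Measurable (ε n))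
    (hε_dist : ∀ n : ℕ, 1 ≤ n →
      μ {ω | ε n ω = 1} = ENNReal.ofReal (1 - l (n - 1) / l n))
    (k : ℕ) : μ.real {ω | ε (k + 1) ω ≠ 1} = l k / l (k + 1) := by
  have hratio : l k / l (k + 1) ≤ 1 := (div_le_one (hl_pos _)).2 (hl_mono k.le_succ)
  have hmeas : MeasurableSet {ω | ε (k + 1) ω = 1} := hε_meas _ (measurableSet_singleton 1)
  rw [← compl_ofPred, probReal_compl_eq_one_sub hmeas,
    measureReal_def, hε_dist _ le_add_self, Nat.add_sub_cancel,
    ENNReal.toReal_ofReal (by linarith)]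
  ring

lemma measureReal_tauProc_le {ε : ℕ → Ω → ℕ} (hl_pos : ∀ n, 0 < l n)
    (hindep : ProbabilityTheory.iIndepFun ε μ)
    (hε : ∀ k, μ.real {ω | ε (k + 1) ω ≠ 1} = l k / l (k + 1)) {m n : ℕ} (hmn : m ≤ n) :
    μ.real {ω | tauProc ε n ω ≤ m} = l m / l n := by
  have hevent : {ω | tauProc ε n ω ≤ m} = ⋂ k ∈ Finset.Ico m n, ε (k + 1) ⁻¹' {1}ᶜ := by
    ext ω
    simp [tauProc_le_iff]
  rw [hevent, measureReal_def,
    (hindep.precomp (add_left_injective 1)).meas_biInter fun k _ => ⟨{1}ᶜ, trivial, rfl⟩,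
    ENNReal.toReal_prod]
  exact (Finset.prod_congr rfl fun k _ => hε k).trans
    (Finset.prod_Ico_div_succ l (fun k => (hl_pos k).ne') hmn)

variable {T : Ω → ℕ} {n : ℕ}

lemma div_le_measureReal_comp_le [IsFiniteMeasure μ] (hl_mono : Monotone l)
    (hT : ∀ m ≤ n, μ.real {ω | T ω ≤ m} = l m / l n) {k : ℕ} {s : ℝ} (hkn : k ≤ n)
    (hks : l k ≤ s) : l k / l n ≤ μ.real {ω | l (T ω) ≤ s} := by
  rw [← hT k hkn]
  exact measureReal_mono fun ω hω => (hl_mono hω).trans hks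

lemma measureReal_comp_le_le_div [IsFiniteMeasure μ] (hl_pos : ∀ n, 0 < l n)
    (hl_mono : Monotone l) (hT_le : ∀ ω, T ω ≤ n)
    (hT : ∀ m ≤ n, μ.real {ω | T ω ≤ m} = l m / l n) {s : ℝ} (hs : 0 ≤ s) :
    μ.real {ω | l (T ω) ≤ s} ≤ s / l n := by
  by_cases h0 : l 0 ≤ s
  · set m := Nat.findGreatest (fun j => l j ≤ s) n
    have hm : l m ≤ s := Nat.findGreatest_spec (P := fun j => l j ≤ s) (Nat.zero_le n) h0
    calc μ.real {ω | l (T ω) ≤ s} ≤ μ.real {ω | T ω ≤ m} :=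
          measureReal_mono fun ω hω => Nat.le_findGreatest (hT_le ω) hω
      _ = l m / l n := hT m (Nat.findGreatest_le n)
      _ ≤ s / l n := div_le_div_of_nonneg_right hm (hl_pos n).le
  · have hempty : {ω | l (T ω) ≤ s} = ∅ :=
      eq_empty_of_forall_notMem fun ω hω => h0 ((hl_mono (Nat.zero_le _)).trans hω)
    rw [hempty, measureReal_empty]
    exact div_nonneg hs (hl_pos n).le

end Distribution

def IsRegularlyVarying (L : ℝ → ℝ) (c : ℝ) : Prop :=
  ∀ x : ℝ, 0 < x → Tendsto (fun t : ℝ => L (t * x) / L t) atTop (𝓝 (x ^ c))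

namespace IsRegularlyVarying

variable {L : ℝ → ℝ} {c : ℝ}

lemma tendsto_natCast_mul_rpow_inv (hL : IsRegularlyVarying L c) (hc : c ≠ 0) {y : ℝ}
    (hy : 0 < y) : Tendsto (fun n : ℕ => L (n * y ^ c⁻¹) / L n) atTop (𝓝 y) := by
  have := (hL _ (Real.rpow_pos_of_pos hy c⁻¹)).comp tendsto_natCast_atTop_atTop
  rwa [Real.rpow_inv_rpow hy.le hc] at this

lemma eventually_exists_nat_between (hL : IsRegularlyVarying L c) (hc : 0 < c)
    (hL_mono : MonotoneOn L (Ici 0)) (hL_pos : ∀ n : ℕ, 0 < L n) {a t : ℝ} (ha : 0 < a)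
    (hat : a < t) (ht : t ≤ 1) :
    ∀ᶠ n : ℕ in atTop, ∃ k ≤ n, a * L n < L k ∧ L k ≤ t * L n := by
  obtain ⟨y, hay, hyt⟩ := exists_between hat
  obtain ⟨z, haz, hzy⟩ := exists_between hay
  have hz : 0 < z := ha.trans haz
  have hy : 0 < y := hz.trans hzy
  have hxz : 0 < z ^ c⁻¹ := Real.rpow_pos_of_pos hz _
  have hxzy : z ^ c⁻¹ < y ^ c⁻¹ := Real.rpow_lt_rpow hz.le hzy (inv_pos.2 hc)
  have hxy : y ^ c⁻¹ ≤ 1 := Real.rpow_le_one hy.le (hyt.le.trans ht) (inv_pos.2 hc).le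
  filter_upwards [(hL.tendsto_natCast_mul_rpow_inv hc.ne' hy).eventually_lt_const hyt,
    (hL.tendsto_natCast_mul_rpow_inv hc.ne' hz).eventually_const_lt haz,
    (tendsto_natCast_atTop_atTop.atTop_mul_const (sub_pos.2 hxzy)).eventually_ge_atTop 1]
    with n hupper hlower hgap
  have hn : (0 : ℝ) ≤ n := n.cast_nonneg
  set k := ⌊(n : ℝ) * y ^ c⁻¹⌋₊
  have hk_upper : (k : ℝ) ≤ n * y ^ c⁻¹ := Nat.floor_le (by positivity)
  have hk_lower : n * z ^ c⁻¹ ≤ k := by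
    linarith [Nat.sub_one_lt_floor ((n : ℝ) * y ^ c⁻¹)]
  refine ⟨k, Nat.floor_le_of_le (by nlinarith), ?_, ?_⟩
  · calc a * L n < L (n * z ^ c⁻¹) := (lt_div_iff₀ (hL_pos n)).1 hlower
      _ ≤ L k := hL_mono (mem_Ici.2 (by positivity)) (mem_Ici.2 k.cast_nonneg) hk_lower
  · calc L k ≤ L (n * y ^ c⁻¹) :=
          hL_mono (mem_Ici.2 k.cast_nonneg) (mem_Ici.2 (by positivity)) hk_upper
      _ ≤ t * L n := ((div_lt_iff₀ (hL_pos n)).1 hupper).le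

end IsRegularlyVarying

theorem L_tau_unif_limit_general
    {Ω : Type*} [MeasurableSpace Ω] (ℙ : Measure Ω) [IsProbabilityMeasure ℙ]
    (l : ℕ → ℝ) (hl_pos : ∀ n, 0 < l n) (hl_mono : Monotone l)
    (ε : ℕ → Ω → ℕ)
    (hε_meas : ∀ n, Measurable (ε n))
    (hε_dist : ∀ n : ℕ, 1 ≤ n →
      ℙ {ω | ε n ω = 1} = ENNReal.ofReal (1 - l (n - 1) / l n))
    (hindep : ProbabilityTheory.iIndepFun
      ε ℙ)
    (c : ℝ) (hc : 0 < c)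
    (L : ℝ → ℝ)
    (hL_mono : StrictMonoOn L (Ici (0:ℝ)))
    (hL_interp : ∀ n : ℕ, L n = l n)
    (hL_reg : ∀ x : ℝ, 0 < x →
      Tendsto (fun t : ℝ => L (t * x) / L t) atTop (nhds (x ^ c))) :
    ∀ t : ℝ, 0 < t → t < 1 →
      Tendsto (fun n : ℕ =>
          (ℙ {ω | L (tauProc ε n ω : ℝ) / L n ≤ t}).toReal) atTop (nhds t) := by
  intro t ht0 ht1
  have hτ (n : ℕ) : ∀ m ≤ n, ℙ.real {ω | tauProc ε n ω ≤ m} = l m / l n := fun _ hmn =>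
    measureReal_tauProc_le hl_pos hindep (measureReal_ne_one hl_pos hl_mono hε_meas hε_dist) hmn
  have hevent (n : ℕ) :
      {ω | L (tauProc ε n ω : ℝ) / L n ≤ t} = {ω | l (tauProc ε n ω) ≤ t * l n} := by
    ext ω
    simp only [mem_ofPred_eq, hL_interp, div_le_iff₀ (hl_pos n)]
  simp_rw [← measureReal_def, hevent]
  refine tendsto_order.2 ⟨fun a hat => ?_, fun a hta => Eventually.of_forall fun n => ?_⟩
  · obtain ⟨b, hb, hab, hbt⟩ : ∃ b, 0 < b ∧ a ≤ b ∧ b < t := ⟨max a (t / 2),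
      lt_max_of_lt_right (half_pos ht0), le_max_left _ _, max_lt hat (half_lt_self ht0)⟩
    have hreg : IsRegularlyVarying L c := hL_reg
    filter_upwards [hreg.eventually_exists_nat_between hc hL_mono.monotoneOn
      (fun n => hL_interp n ▸ hl_pos n) hb hbt ht1.le] with n ⟨k, hkn, hbk, hkt⟩
    simp only [hL_interp] at hbk hkt
    calc a ≤ b := hab
      _ < l k / l n := (lt_div_iff₀ (hl_pos n)).2 hbk
      _ ≤ ℙ.real _ := div_le_measureReal_comp_le hl_mono (hτ n) hkn hkt
  · calc ℙ.real _ ≤ t * l n / l n := measureReal_comp_le_le_div hl_pos hl_mono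
          (tauProc_le ε n) (hτ n) (mul_nonneg ht0.le (hl_pos n).le)
      _ = t := mul_div_cancel_right₀ t (hl_pos n).ne'
      _ < a := hta

/-- If `l_n` is regularly varying with index `c ∈ (0,∞)` (via an increasing interpolation
`L`), then `L(τ_n)/L(n)` converges in distribution to the uniform distribution on `[0,1]`:
for every `t ∈ (0,1)`, `P(L(τ_n)/L(n) ≤ t) → t`. -/
theorem L_tau_unif_limit
    {Ω : Type*} [MeasurableSpace Ω] (ℙ : Measure Ω) [IsProbabilityMeasure ℙ]
    (l : ℕ → ℝ) (hl_pos : ∀ n, 0 < l n) (hl_mono : Monotone l)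
    (ε : ℕ → Ω → ℕ)
    (hε_le : ∀ n ω, ε n ω ≤ 1) (hε_meas : ∀ n, Measurable (ε n))
    (hε_dist : ∀ n : ℕ, 1 ≤ n →
      ℙ {ω | ε n ω = 1} = ENNReal.ofReal (1 - l (n - 1) / l n))
    (hindep : ProbabilityTheory.iIndepFun
      ε ℙ)
    (c : ℝ) (hc : 0 < c)
    (L : ℝ → ℝ) (hL_nonneg : ∀ x : ℝ, 0 ≤ x → 0 ≤ L x)
    (hL_mono : StrictMonoOn L (Ici (0:ℝ)))
    (hL_interp : ∀ n : ℕ, L n = l n)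
    (hL_reg : ∀ x : ℝ, 0 < x →
      Tendsto (fun t : ℝ => L (t * x) / L t) atTop (nhds (x ^ c))) :
    ∀ t : ℝ, 0 < t → t < 1 →
      Tendsto (fun n : ℕ =>
          (ℙ {ω | L (tauProc ε n ω : ℝ) / L n ≤ t}).toReal) atTop (nhds t) :=
  L_tau_unif_limit_general ℙ l hl_pos hl_mono ε hε_meas hε_dist hindep c hc L hL_mono hL_interp
    hL_reg
end

section
/- Assume either (i) 0 < c < ∞ and there exists an increasing function L : [0,∞) → [0,∞) with L(n) = l_n for all n ∈ ℕ and L(tx)/L(t) → x^c as t → ∞ for every x > 0, or (ii) c = ∞ and there exists a nondecreasing function L : [0,∞) → [0,∞) with L(n) = l_n for all n ∈ ℕ such that, as t → ∞, L(tx)/L(t) → 0 for every 0 < x < 1 and L(tx)/L(t) → ∞ for every x > 1. Then τ_n → ∞ almost surely as n → ∞. -/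
/-!
The growth condition on `L` forces `l n → ∞`: a bounded monotone `l` would give
`l (2n) / l n → 1`, whereas the condition makes this ratio tend to `2 ^ c > 1` or to `∞`.
Since `∏_{N ≤ n < M} l n / l (n + 1) = l N / l M → 0`, the probabilities
`P(ε_{n+1} = 1) = 1 - l n / l (n + 1)` have divergent sum, so by the second Borel–Cantelli lemma
`ε_n = 1` infinitely often almost surely, and each such `n` is a lower bound for `τ_m`, `m ≥ n`.
-/

open MeasureTheory Filter Set
open scoped ENNReal

open Topology

lemma one_sub_div_le_add_one_sub_div {a b c : ℝ} (hab : a ≤ b) (hbc : b ≤ c) (hb : 0 < b) :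
    1 - a / c ≤ (1 - a / b) + (1 - b / c) := by
  have hc : 0 < c := hb.trans_le hbc
  -- the difference of the two sides is this product
  have hprod : 0 ≤ (1 - a / b) * (1 - b / c) :=
    mul_nonneg (sub_nonneg.2 ((div_le_one hb).2 hab)) (sub_nonneg.2 ((div_le_one hc).2 hbc))
  have hmul : a / b * (b / c) = a / c := by field_simp
  nlinarith

lemma one_sub_div_le_sum_Ico {l : ℕ → ℝ} (hl_pos : ∀ n, 0 < l n) (hl_mono : Monotone l)
    {N M : ℕ} (hNM : N ≤ M) :
    1 - l N / l M ≤ ∑ n ∈ Finset.Ico N M, (1 - l n / l (n + 1)) := by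
  induction M, hNM using Nat.le_induction with
  | base => simp [div_self (hl_pos N).ne']
  | succ M hNM ih =>
    rw [Finset.sum_Ico_succ_top hNM]
    have := one_sub_div_le_add_one_sub_div (hl_mono hNM) (hl_mono M.le_succ) (hl_pos M)
    linarith

lemma tsum_ofReal_one_sub_div_eq_top {l : ℕ → ℝ} (hl_pos : ∀ n, 0 < l n) (hl_mono : Monotone l)
    (hl_top : Tendsto l atTop atTop) :
    ∑' n, ENNReal.ofReal (1 - l n / l (n + 1)) = ∞ := by
  set g : ℕ → ℝ≥0∞ := fun n => ENNReal.ofReal (1 - l n / l (n + 1))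
  by_contra h
  have hg_nonneg (n : ℕ) : 0 ≤ 1 - l n / l (n + 1) :=
    sub_nonneg.2 ((div_le_one (hl_pos _)).2 (hl_mono n.le_succ))
  have htail (N : ℕ) : 1 ≤ ∑' k, g (k + N) := by
    have hlim : Tendsto (fun M => ENNReal.ofReal (1 - l N / l M)) atTop (𝓝 1) := by
      have hratio : Tendsto (fun M => l N / l M) atTop (𝓝 0) :=
        tendsto_const_nhds.div_atTop hl_top
      simpa using ENNReal.tendsto_ofReal ((tendsto_const_nhds (x := (1 : ℝ))).sub hratio)
    refine le_of_tendsto hlim ((eventually_ge_atTop N).mono fun M hNM => ?_)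
    calc ENNReal.ofReal (1 - l N / l M)
        ≤ ENNReal.ofReal (∑ n ∈ Finset.Ico N M, (1 - l n / l (n + 1))) :=
          ENNReal.ofReal_le_ofReal (one_sub_div_le_sum_Ico hl_pos hl_mono hNM)
      _ = ∑ n ∈ Finset.Ico N M, g n := ENNReal.ofReal_sum_of_nonneg fun n _ => hg_nonneg n
      _ = ∑ k ∈ Finset.range (M - N), g (k + N) := by
          rw [Finset.sum_Ico_eq_sum_range]; simp only [add_comm N]
      _ ≤ ∑' k, g (k + N) := ENNReal.sum_le_tsum _
  have := ge_of_tendsto' (ENNReal.tendsto_sum_nat_add g h) htail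
  simp at this

lemma Monotone.tendsto_atTop_of_tendsto_ratio {l : ℕ → ℝ} (hl_mono : Monotone l) (hl0 : 0 < l 0)
    {k : ℕ} (hk : 0 < k) {f : Filter ℝ} (hf : Disjoint f (𝓝 1))
    (h : Tendsto (fun n : ℕ => l (n * k) / l n) atTop f) :
    Tendsto l atTop atTop := by
  rcases tendsto_atTop_of_monotone hl_mono with hl_top | ⟨A, hA⟩
  · exact hl_top
  have hA0 : 0 < A := hl0.trans_le (hl_mono.ge_of_tendsto hA 0)
  have hratio : Tendsto (fun n : ℕ => l (n * k) / l n) atTop (𝓝 1) := by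
    have := (hA.comp (tendsto_id.atTop_mul_const' hk)).div hA hA0.ne'
    rwa [div_self hA0.ne'] at this
  exact absurd hratio (h.not_tendsto hf)

lemma Tendsto.comp_natCast_ratio {L : ℝ → ℝ} {l : ℕ → ℝ} (hLl : ∀ n : ℕ, L n = l n) {k : ℕ}
    {f : Filter ℝ} (h : Tendsto (fun t : ℝ => L (t * k) / L t) atTop f) :
    Tendsto (fun n : ℕ => l (n * k) / l n) atTop f := by
  refine (h.comp tendsto_natCast_atTop_atTop).congr fun n => ?_
  simp [← hLl, Nat.cast_mul]

lemma ProbabilityTheory.iIndepFun.iIndepSet_preimage {Ω ι β : Type*} {mΩ : MeasurableSpace Ω}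
    {μ : Measure Ω} {mβ : MeasurableSpace β} {f : ι → Ω → β} (hf : iIndepFun f μ)
    {t : Set β} (ht : MeasurableSet t) (hfm : ∀ i, Measurable (f i)) :
    iIndepSet (fun i => f i ⁻¹' t) μ := by
  rw [iIndepSet_iff_meas_biInter fun i => hfm i ht]
  exact fun S => hf.measure_inter_preimage_eq_mul S fun _ _ => ht

lemma ProbabilityTheory.ae_frequently_mem_of_iIndepSet {Ω : Type*} {mΩ : MeasurableSpace Ω}
    {μ : Measure Ω} {s : ℕ → Set Ω} (hsm : ∀ n, MeasurableSet (s n)) (hs : iIndepSet s μ)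
    (hs' : ∑' n, μ (s n) = ∞) :
    ∀ᵐ ω ∂μ, ∃ᶠ n in atTop, ω ∈ s n := by
  have := hs.isProbabilityMeasure
  have hlimsup : ∀ᵐ ω ∂μ, ω ∈ limsup s atTop := by
    refine (ae_iff_measure_eq (p := (· ∈ limsup s atTop))
      (MeasurableSet.measurableSet_limsup hsm).nullMeasurableSet).2 ?_
    simpa using measure_limsup_eq_one hsm hs hs'
  exact hlimsup.mono fun ω => mem_limsup_iff_frequently_mem.1

lemma le_tauProc {Ω : Type*} {ε : ℕ → Ω → ℕ} {ω : Ω} {k n : ℕ} (hk : 1 ≤ k) (hkn : k ≤ n)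
    (hε : ε k ω = 1) : k ≤ tauProc ε n ω :=
  Finset.le_sup (f := id) (Finset.mem_filter.2 ⟨Finset.mem_Icc.2 ⟨hk, hkn⟩, hε⟩)

lemma tendsto_tauProc_atTop {Ω : Type*} {ε : ℕ → Ω → ℕ} {ω : Ω}
    (h : ∃ᶠ n in atTop, ε n ω = 1) : Tendsto (fun n => tauProc ε n ω) atTop atTop := by
  refine tendsto_atTop.2 fun B => ?_
  obtain ⟨k, hk, hεk⟩ := frequently_atTop.1 h (max B 1)
  filter_upwards [eventually_ge_atTop k] with n hn
  exact (le_of_max_le_left hk).trans (le_tauProc (le_of_max_le_right hk) hn hεk)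

theorem tau_tendsto_atTop_ae_general
    {Ω : Type*} [MeasurableSpace Ω] (ℙ : Measure Ω)
    (l : ℕ → ℝ) (hl_pos : ∀ n, 0 < l n) (hl_mono : Monotone l)
    (ε : ℕ → Ω → ℕ)
    (hε_meas : ∀ n, Measurable (ε n))
    (hε_dist : ∀ n : ℕ, 1 ≤ n →
      ℙ {ω | ε n ω = 1} = ENNReal.ofReal (1 - l (n - 1) / l n))
    (hindep : ProbabilityTheory.iIndepFun
      (m := fun _ : ℕ => (inferInstance : MeasurableSpace ℕ)) ε ℙ)
    (hL : (∃ c : ℝ, 0 < c ∧ ∃ L : ℝ → ℝ,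
            (∀ x : ℝ, 0 ≤ x → 0 ≤ L x) ∧ StrictMonoOn L (Ici (0:ℝ)) ∧
            (∀ n : ℕ, L n = l n) ∧
            (∀ x : ℝ, 0 < x →
              Tendsto (fun t : ℝ => L (t * x) / L t) atTop (nhds (x ^ c)))) ∨
          (∃ L : ℝ → ℝ,
            (∀ x : ℝ, 0 ≤ x → 0 ≤ L x) ∧ MonotoneOn L (Ici (0:ℝ)) ∧
            (∀ n : ℕ, L n = l n) ∧
            (∀ x : ℝ, 0 < x → x < 1 →
              Tendsto (fun t : ℝ => L (t * x) / L t) atTop (nhds 0)) ∧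
            (∀ x : ℝ, 1 < x →
              Tendsto (fun t : ℝ => L (t * x) / L t) atTop atTop))) :
    ∀ᵐ ω ∂ℙ, Tendsto (fun n : ℕ => tauProc ε n ω) atTop atTop := by
  have hl_top : Tendsto l atTop atTop := by
    rcases hL with ⟨c, hc, L, -, -, hLl, hlim⟩ | ⟨L, -, -, hLl, -, hinf⟩
    · have h2c : (2 : ℝ) ^ c ≠ 1 := (Real.one_lt_rpow (by norm_num) hc).ne'
      exact hl_mono.tendsto_atTop_of_tendsto_ratio (hl_pos 0) two_pos (disjoint_nhds_nhds.2 h2c)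
        (Tendsto.comp_natCast_ratio hLl (by exact_mod_cast hlim 2 two_pos))
    · exact hl_mono.tendsto_atTop_of_tendsto_ratio (hl_pos 0) two_pos (disjoint_nhds_atTop 1).symm
        (Tendsto.comp_natCast_ratio hLl (by exact_mod_cast hinf 2 one_lt_two))
  have hmeas (n : ℕ) : MeasurableSet (ε n ⁻¹' {1}) := hε_meas n (measurableSet_singleton 1)
  have hsum : ∑' n, ℙ (ε n ⁻¹' {1}) = ∞ := by
    refine top_unique ?_
    calc ∞ = ∑' n, ENNReal.ofReal (1 - l n / l (n + 1)) :=
          (tsum_ofReal_one_sub_div_eq_top hl_pos hl_mono hl_top).symm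
      _ = ∑' n, ℙ (ε (n + 1) ⁻¹' {1}) := by
          congr! 2 with n
          exact (hε_dist (n + 1) (Nat.le_add_left 1 n)).symm
      _ ≤ ∑' n, ℙ (ε n ⁻¹' {1}) :=
          ENNReal.tsum_comp_le_tsum_of_injective (add_left_injective 1) _
  filter_upwards [ProbabilityTheory.ae_frequently_mem_of_iIndepSet hmeas
    (hindep.iIndepSet_preimage (measurableSet_singleton 1) hε_meas) hsum] with ω hω
  exact tendsto_tauProc_atTop hω

/-- If `l_n` is regularly varying with index `c ∈ (0,∞)` or has fast increments
(`c = ∞`), then `τ_n → ∞` almost surely. -/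
theorem tau_tendsto_atTop_ae
    {Ω : Type*} [MeasurableSpace Ω] (ℙ : Measure Ω) [IsProbabilityMeasure ℙ]
    (l : ℕ → ℝ) (hl_pos : ∀ n, 0 < l n) (hl_mono : Monotone l)
    (ε : ℕ → Ω → ℕ)
    (hε_le : ∀ n ω, ε n ω ≤ 1) (hε_meas : ∀ n, Measurable (ε n))
    (hε_dist : ∀ n : ℕ, 1 ≤ n →
      ℙ {ω | ε n ω = 1} = ENNReal.ofReal (1 - l (n - 1) / l n))
    (hindep : ProbabilityTheory.iIndepFun
      (m := fun _ : ℕ => (inferInstance : MeasurableSpace ℕ)) ε ℙ)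
    (hL : (∃ c : ℝ, 0 < c ∧ ∃ L : ℝ → ℝ,
            (∀ x : ℝ, 0 ≤ x → 0 ≤ L x) ∧ StrictMonoOn L (Ici (0:ℝ)) ∧
            (∀ n : ℕ, L n = l n) ∧
            (∀ x : ℝ, 0 < x →
              Tendsto (fun t : ℝ => L (t * x) / L t) atTop (nhds (x ^ c)))) ∨
          (∃ L : ℝ → ℝ,
            (∀ x : ℝ, 0 ≤ x → 0 ≤ L x) ∧ MonotoneOn L (Ici (0:ℝ)) ∧
            (∀ n : ℕ, L n = l n) ∧
            (∀ x : ℝ, 0 < x → x < 1 →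
              Tendsto (fun t : ℝ => L (t * x) / L t) atTop (nhds 0)) ∧
            (∀ x : ℝ, 1 < x →
              Tendsto (fun t : ℝ => L (t * x) / L t) atTop atTop))) :
    ∀ᵐ ω ∂ℙ, Tendsto (fun n : ℕ => tauProc ε n ω) atTop atTop :=
  tau_tendsto_atTop_ae_general ℙ l hl_pos hl_mono ε hε_meas hε_dist hindep hL
end

section
/- Assume there exists a nondecreasing function L : [0,∞) → [0,∞) with L(n) = l_n for all n ∈ ℕ such that, as t → ∞, L(tx)/L(t) → 0 for every 0 < x < 1 and L(tx)/L(t) → ∞ for every x > 1 (fast increments, c = ∞); assume q_n → q ∈ [0,1]; and assume there exists p̄ ∈ [0,1] such that s_n/n → p̄ in probability. Then the empirical measures g_n converge weakly on [0,1] to the Dirac mass δ_{1−q} as n → ∞. -/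
/-!
The break points of generation `n + 1` interlace those of generation `n`, so for `j ≤ k ≤ m + 1`
the point `a (m + j) k` stays in the generation-`m` interval `[a m 0, a m (m + 1)]`. The left
endpoint moves by `(1 - q_{n+1}) (l_{n+1} - l_n)` at each step, hence by
`(1 - q + o(1)) (l_n - l_m)` from generation `m` to `n`. Consequently
`|α_{n,k} - (1 - q)| ≤ o(1) + l_m / l_n` for `n - m ≤ k ≤ m + 1`, and fast increments make
`l_m / l_n` small as soon as `m ≤ (1 - δ) n`. So all but a fraction `≈ 2δ` of the atoms of `g_n`
lie near `1 - q`.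
-/

open MeasureTheory Filter Set
open scoped ENNReal

/-- `s_n = Σ_{k=1}^n Y_{k, x_{k-1}+1}`. -/
def sProc {Ω : Type*} (Y : ℕ → ℕ → Ω → ℕ) (ν ε : ℕ → Ω → ℕ) (n : ℕ) (ω : Ω) : ℕ :=
  ∑ k ∈ Finset.Icc 1 n, Y k (xProc Y ν ε (k - 1) ω + 1) ω

/-- The empirical measure `g_n = (1/n) Σ_{k=1}^n δ_{α_{n,k}}`. -/
noncomputable def empiricalMeasure (α : ℕ → ℕ → ℝ) (n : ℕ) : Measure ℝ :=
  ((n : ℝ≥0∞))⁻¹ • ∑ k ∈ Finset.Icc 1 n, Measure.dirac (α n k)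

open scoped Finset Topology

theorem exists_abs_sub_sub_mul_le_of_tendsto {u w c : ℕ → ℝ} {c₀ η : ℝ} (hw : Monotone w)
    (hu : ∀ n, u n - u (n + 1) = c (n + 1) * (w (n + 1) - w n))
    (hc : Tendsto c atTop (𝓝 c₀)) (hη : 0 < η) :
    ∃ N, ∀ m n, N ≤ m → m ≤ n → |u m - u n - c₀ * (w n - w m)| ≤ η * (w n - w m) := by
  obtain ⟨N, hN⟩ := Metric.tendsto_atTop.mp hc η hη
  refine ⟨N, fun m n hm hmn => ?_⟩
  induction n, hmn using Nat.le_induction with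
  | base => simp
  | succ n hmn ih =>
    have hc' : |c (n + 1) - c₀| ≤ η := (hN (n + 1) (by omega)).le
    have hdw : 0 ≤ w (n + 1) - w n := sub_nonneg.2 (hw n.le_succ)
    calc |u m - u (n + 1) - c₀ * (w (n + 1) - w m)|
        = |(u m - u n - c₀ * (w n - w m)) + (c (n + 1) - c₀) * (w (n + 1) - w n)| := by
          congr 1; linarith [hu n]
      _ ≤ |u m - u n - c₀ * (w n - w m)| + |c (n + 1) - c₀| * (w (n + 1) - w n) := by
          rw [← abs_of_nonneg hdw, ← abs_mul, abs_of_nonneg hdw]; exact abs_add_le _ _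
      _ ≤ η * (w n - w m) + η * (w (n + 1) - w n) :=
          add_le_add ih (mul_le_mul_of_nonneg_right hc' hdw)
      _ = η * (w (n + 1) - w m) := by ring

theorem eventually_div_lt_of_tendsto_div {L : ℝ → ℝ} (hL_mono : MonotoneOn L (Ici 0))
    (hL_pos : ∀ n : ℕ, 0 < L n) {x : ℝ} (hx : 0 ≤ x)
    (hfast : Tendsto (fun t => L (t * x) / L t) atTop (𝓝 0)) {η : ℝ} (hη : 0 < η) :
    ∀ᶠ n : ℕ in atTop, ∀ m : ℕ, (m : ℝ) ≤ n * x → L m / L n < η := by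
  filter_upwards [(hfast.comp tendsto_natCast_atTop_atTop).eventually (gt_mem_nhds hη)]
    with n hn m hm
  exact (div_le_div_of_nonneg_right
    (hL_mono (mem_Ici.2 m.cast_nonneg) (mem_Ici.2 (by positivity)) hm) (hL_pos n).le).trans_lt hn

theorem card_filter_Icc_le_of_forall_not (P : ℕ → Prop) [DecidablePred P] {n m : ℕ}
    (hP : ∀ k, n - m ≤ k → k ≤ m + 1 → ¬ P k) : #{k ∈ Finset.Icc 1 n | P k} ≤ 2 * (n - m) :=
  calc #{k ∈ Finset.Icc 1 n | P k} ≤ #(Finset.Ico 1 (n - m) ∪ Finset.Ioc (m + 1) n) := by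
        refine Finset.card_le_card fun k hk => ?_
        simp only [Finset.mem_filter, Finset.mem_Icc] at hk
        simp only [Finset.mem_union, Finset.mem_Ico, Finset.mem_Ioc]
        by_cases h₁ : n - m ≤ k
        · by_cases h₂ : k ≤ m + 1
          · exact absurd hk.2 (hP k h₁ h₂)
          · omega
        · omega
    _ ≤ #(Finset.Ico 1 (n - m)) + #(Finset.Ioc (m + 1) n) := Finset.card_union_le _ _
    _ ≤ 2 * (n - m) := by simp only [Nat.card_Ico, Nat.card_Ioc]; omega

theorem tendsto_average_of_card_far_le {u : ℕ → ℕ → ℝ} {B : ℝ} (hB : ∀ n k, |u n k| ≤ B)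
    (h : ∀ ε > 0, ∀ δ > 0, ∀ᶠ n : ℕ in atTop, (#{k ∈ Finset.Icc 1 n | ε ≤ |u n k|} : ℝ) ≤ δ * n) :
    Tendsto (fun n : ℕ => (n : ℝ)⁻¹ * ∑ k ∈ Finset.Icc 1 n, u n k) atTop (𝓝 0) := by
  refine Metric.tendsto_nhds.2 fun ε hε => ?_
  have hB0 : 0 ≤ B := (abs_nonneg _).trans (hB 0 0)
  filter_upwards [h (ε / 2) (by positivity) (ε / (4 * (B + 1))) (by positivity),
    eventually_ge_atTop 1] with n hfar hn
  set far := {k ∈ Finset.Icc 1 n | ε / 2 ≤ |u n k|}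
  set near := {k ∈ Finset.Icc 1 n | ¬ ε / 2 ≤ |u n k|}
  have hnpos : (0 : ℝ) < n := by exact_mod_cast hn
  have hfar_sum : ∑ k ∈ far, |u n k| ≤ #far * B := by
    simpa using Finset.sum_le_card_nsmul far _ B fun k _ => hB n k
  have hnear_sum : ∑ k ∈ near, |u n k| ≤ n * (ε / 2) := by
    have hcard : (#near : ℝ) ≤ n := by
      exact_mod_cast (Finset.card_filter_le _ _).trans (by simp)
    calc ∑ k ∈ near, |u n k| ≤ #near * (ε / 2) := by
          simpa using Finset.sum_le_card_nsmul near _ (ε / 2) fun k hk =>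
            (not_le.1 (Finset.mem_filter.1 hk).2).le
      _ ≤ n * (ε / 2) := by gcongr
  have hδB : ε / (4 * (B + 1)) * n * B ≤ ε / 4 * n := by
    rw [div_mul_eq_mul_div, div_mul_eq_mul_div, div_le_iff₀ (by positivity)]
    nlinarith [mul_pos hε hnpos]
  have hsum : |∑ k ∈ Finset.Icc 1 n, u n k| < ε * n :=
    calc |∑ k ∈ Finset.Icc 1 n, u n k| ≤ ∑ k ∈ Finset.Icc 1 n, |u n k| :=
          Finset.abs_sum_le_sum_abs _ _
      _ = ∑ k ∈ far, |u n k| + ∑ k ∈ near, |u n k| :=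
          (Finset.sum_filter_add_sum_filter_not _ _ _).symm
      _ ≤ ε / (4 * (B + 1)) * n * B + n * (ε / 2) := by
          gcongr
          exact hfar_sum.trans (mul_le_mul_of_nonneg_right hfar hB0)
      _ < ε * n := by nlinarith [mul_pos hε hnpos]
  rw [dist_zero_right, norm_mul, norm_inv, Real.norm_natCast, Real.norm_eq_abs,
    inv_mul_lt_iff₀ hnpos]
  linarith

theorem integral_empiricalMeasure (α : ℕ → ℕ → ℝ) (n : ℕ) (f : ℝ → ℝ) :
    ∫ x, f x ∂empiricalMeasure α n = (n : ℝ)⁻¹ * ∑ k ∈ Finset.Icc 1 n, f (α n k) := by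
  rw [empiricalMeasure, integral_smul_measure,
    integral_finsetSum_measure fun k _ => integrable_dirac enorm_lt_top]
  simp [integral_dirac]

theorem tendsto_integral_empiricalMeasure_of_card_far_le {α : ℕ → ℕ → ℝ} {c : ℝ}
    (h : ∀ ε > 0, ∀ δ > 0, ∀ᶠ n : ℕ in atTop,
      (#{k ∈ Finset.Icc 1 n | ε ≤ |α n k - c|} : ℝ) ≤ δ * n)
    (f : BoundedContinuousFunction ℝ ℝ) :
    Tendsto (fun n => ∫ x, f x ∂empiricalMeasure α n) atTop (𝓝 (∫ x, f x ∂Measure.dirac c)) := by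
  have hfar : ∀ ε > 0, ∀ δ > 0, ∀ᶠ n : ℕ in atTop,
      (#{k ∈ Finset.Icc 1 n | ε ≤ |f (α n k) - f c|} : ℝ) ≤ δ * n := by
    intro ε hε δ hδ
    obtain ⟨ρ, hρ, hfρ⟩ := Metric.continuousAt_iff.1 f.continuous.continuousAt ε hε
    filter_upwards [h ρ hρ δ hδ] with n hn
    refine le_trans (Nat.cast_le.2 (Finset.card_le_card
      (Finset.monotone_filter_right _ fun k _ hk => ?_))) hn
    by_contra hρk
    exact (not_le.2 (hfρ (x := α n k) (by rwa [Real.dist_eq, ← not_le]))) hk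
  have hu := tendsto_average_of_card_far_le (fun n k => by
    simpa [Real.dist_eq] using f.dist_le_two_norm (α n k) c) hfar
  rw [integral_dirac, ← zero_add (f c)]
  refine (hu.add_const (f c)).congr' ?_
  filter_upwards [eventually_ge_atTop 1] with n hn
  have hnpos : (n : ℝ) ≠ 0 := by positivity
  rw [integral_empiricalMeasure, Finset.sum_sub_distrib, Finset.sum_const, Nat.card_Icc,
    nsmul_eq_mul, mul_sub, Nat.add_sub_cancel, inv_mul_cancel_left₀ hnpos, sub_add_cancel]

structure IsBreakPointScheme (p a : ℕ → ℕ → ℝ) : Prop where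
  mem_Icc : ∀ n k, p n k ∈ Icc (0:ℝ) 1
  antitone_left : Antitone fun n => a n 0
  monotone_right : Monotone fun n => a n (n + 1)
  left_lt_right : a 0 0 < a 0 1
  split_eq : ∀ n : ℕ, 1 ≤ n → ∀ k : ℕ, 1 ≤ k → k ≤ n →
    a n k = p n k * a (n - 1) (k - 1) + (1 - p n k) * a (n - 1) k

namespace IsBreakPointScheme

variable {p a : ℕ → ℕ → ℝ} {l qseq : ℕ → ℝ} {q : ℝ} {L : ℝ → ℝ}

theorem split_eq_succ (h : IsBreakPointScheme p a) {n k : ℕ} (hk : k ≤ n) :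
    a (n + 1) (k + 1) = p (n + 1) (k + 1) * a n k + (1 - p (n + 1) (k + 1)) * a n (k + 1) := by
  simpa using h.split_eq (n + 1) (by omega) (k + 1) (by omega) (by omega)

theorem succ_succ_mem_Icc (h : IsBreakPointScheme p a) {n k : ℕ} (hk : k ≤ n)
    (hle : a n k ≤ a n (k + 1)) : a (n + 1) (k + 1) ∈ Icc (a n k) (a n (k + 1)) := by
  obtain ⟨hp0, hp1⟩ := h.mem_Icc (n + 1) (k + 1)
  rw [h.split_eq_succ hk]
  constructor <;> nlinarith

theorem interlace_of_le_succ (h : IsBreakPointScheme p a) {n : ℕ}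
    (hmono : ∀ k ≤ n, a n k ≤ a n (k + 1)) {k : ℕ} (hk : k ≤ n + 1) :
    a (n + 1) k ≤ a n k ∧ a n k ≤ a (n + 1) (k + 1) := by
  constructor
  · cases k with
    | zero => exact h.antitone_left n.le_succ
    | succ k => exact (h.succ_succ_mem_Icc (by omega) (hmono k (by omega))).2
  · rcases hk.lt_or_eq with hk | rfl
    · exact (h.succ_succ_mem_Icc (by omega) (hmono k (by omega))).1
    · exact h.monotone_right n.le_succ

theorem le_succ (h : IsBreakPointScheme p a) {n k : ℕ} (hk : k ≤ n) : a n k ≤ a n (k + 1) := by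
  induction n generalizing k with
  | zero =>
    obtain rfl : k = 0 := by omega
    exact h.left_lt_right.le
  | succ n ih =>
    obtain ⟨hdown, hup⟩ := h.interlace_of_le_succ (fun _ => ih) (k := k) (by omega)
    exact hdown.trans hup

theorem interlace (h : IsBreakPointScheme p a) {n k : ℕ} (hk : k ≤ n + 1) :
    a (n + 1) k ≤ a n k ∧ a n k ≤ a (n + 1) (k + 1) :=
  h.interlace_of_le_succ (fun _ => h.le_succ) hk

theorem monotoneOn (h : IsBreakPointScheme p a) (n : ℕ) : MonotoneOn (a n) (Iic (n + 1)) :=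
  monotoneOn_of_le_succ ordConnected_Iic fun k _ _ hk => h.le_succ (by simp_all)

theorem mem_Icc_of_le (h : IsBreakPointScheme p a) {m j k : ℕ} (hjk : j ≤ k) (hk : k ≤ m + 1) :
    a (m + j) k ∈ Icc (a m 0) (a m (m + 1)) := by
  induction j generalizing k with
  | zero =>
    have hk' : k ∈ Iic (m + 1) := hk
    exact ⟨h.monotoneOn m (by simp) hk' k.zero_le, h.monotoneOn m hk' (by simp) hk⟩
  | succ j ih =>
    obtain ⟨k, rfl⟩ : ∃ i, k = i + 1 := ⟨k - 1, by omega⟩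
    exact ⟨(ih (k := k) (by omega) (by omega)).1.trans (h.interlace (n := m + j) (by omega)).2,
      (h.interlace (n := m + j) (by omega)).1.trans (ih (k := k + 1) (by omega) hk).2⟩

theorem length_monotone (h : IsBreakPointScheme p a) (hl : ∀ n, l n = a n (n + 1) - a n 0) :
    Monotone l :=
  monotone_nat_of_le_succ fun n => by
    rw [hl, hl]; linarith [h.antitone_left n.le_succ, h.monotone_right n.le_succ]

theorem length_pos (h : IsBreakPointScheme p a) (hl : ∀ n, l n = a n (n + 1) - a n 0) (n : ℕ) :
    0 < l n :=
  (show 0 < l 0 by rw [hl 0]; linarith [h.left_lt_right]).trans_le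
    (h.length_monotone hl n.zero_le)

theorem left_sub_left_succ (h : IsBreakPointScheme p a) (hl : ∀ n, l n = a n (n + 1) - a n 0)
    (hq_def : ∀ n : ℕ, 1 ≤ n → l (n - 1) < l n →
      qseq n = (a n (n + 1) - a (n - 1) n) / (l n - l (n - 1))) (n : ℕ) :
    a n 0 - a (n + 1) 0 = (1 - qseq (n + 1)) * (l (n + 1) - l n) := by
  have hsum : (a n 0 - a (n + 1) 0) + (a (n + 1) (n + 1 + 1) - a n (n + 1)) = l (n + 1) - l n := by
    rw [hl, hl]; ring
  rcases (h.length_monotone hl n.le_succ).lt_or_eq with hlt | heq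
  · have hq := hq_def (n + 1) (by omega) (by simpa using hlt)
    simp only [Nat.add_sub_cancel] at hq
    rw [hq]
    field_simp [(sub_pos.2 hlt).ne']
    linarith
  · rw [heq, sub_self, mul_zero]
    linarith [h.antitone_left n.le_succ, h.monotone_right n.le_succ]

theorem abs_div_length_sub_le (h : IsBreakPointScheme p a) (hl : ∀ n, l n = a n (n + 1) - a n 0)
    (hq_def : ∀ n : ℕ, 1 ≤ n → l (n - 1) < l n →
      qseq n = (a n (n + 1) - a (n - 1) n) / (l n - l (n - 1)))
    (hq_lim : Tendsto qseq atTop (𝓝 q)) (hq : q ∈ Icc (0:ℝ) 1) {η : ℝ} (hη : 0 < η) :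
    ∃ N, ∀ m j k, N ≤ m → j ≤ k → k ≤ m + 1 →
      |(a (m + j) k - a (m + j) 0) / l (m + j) - (1 - q)| ≤ η + l m / l (m + j) := by
  obtain ⟨N, hN⟩ := exists_abs_sub_sub_mul_le_of_tendsto (u := fun n => a n 0)
    (h.length_monotone hl) (h.left_sub_left_succ hl hq_def) (tendsto_const_nhds.sub hq_lim) hη
  refine ⟨N, fun m j k hm hjk hk => ?_⟩
  have hln := h.length_pos hl (m + j)
  have hlm := h.length_pos hl m
  obtain ⟨hlo, hhi⟩ := h.mem_Icc_of_le hjk hk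
  obtain ⟨hc₁, hc₂⟩ := abs_le.mp (hN m (m + j) hm (by omega))
  have hηl : η * (l (m + j) - l m) ≤ η * l (m + j) := by nlinarith
  rw [div_sub' hln.ne', abs_div, abs_of_pos hln, div_le_iff₀ hln, add_mul,
    div_mul_cancel₀ _ hln.ne', abs_le]
  constructor <;> nlinarith [hl m, hq.1, hq.2]

theorem eventually_abs_div_length_sub_lt (h : IsBreakPointScheme p a)
    (hl : ∀ n, l n = a n (n + 1) - a n 0)
    (hq_def : ∀ n : ℕ, 1 ≤ n → l (n - 1) < l n →
      qseq n = (a n (n + 1) - a (n - 1) n) / (l n - l (n - 1)))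
    (hq_lim : Tendsto qseq atTop (𝓝 q)) (hq : q ∈ Icc (0:ℝ) 1)
    (hL_mono : MonotoneOn L (Ici 0)) (hL_interp : ∀ n : ℕ, L n = l n) {x : ℝ} (hx : x ∈ Ioo 0 1)
    (hfast : Tendsto (fun t => L (t * x) / L t) atTop (𝓝 0)) {ε : ℝ} (hε : 0 < ε) :
    ∀ᶠ n : ℕ in atTop, ∀ k, n - ⌊n * x⌋₊ ≤ k → k ≤ ⌊n * x⌋₊ + 1 →
      |(a n k - a n 0) / l n - (1 - q)| < ε := by
  obtain ⟨N, hN⟩ := h.abs_div_length_sub_le hl hq_def hq_lim hq (half_pos hε)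
  have hfloor : Tendsto (fun n : ℕ => ⌊(n : ℝ) * x⌋₊) atTop atTop :=
    tendsto_nat_floor_atTop.comp (tendsto_natCast_atTop_atTop.atTop_mul_const hx.1)
  have hratio := eventually_div_lt_of_tendsto_div hL_mono
    (fun n => hL_interp n ▸ h.length_pos hl n) hx.1.le hfast (half_pos hε)
  filter_upwards [hfloor.eventually_ge_atTop N, hratio] with n hNn hr k hk₁ hk₂
  have hmn : ⌊(n : ℝ) * x⌋₊ ≤ n :=
    Nat.floor_le_of_le (mul_le_of_le_one_right n.cast_nonneg hx.2.le)
  have hlm := hr _ (Nat.floor_le (by have := hx.1; positivity))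
  rw [hL_interp, hL_interp] at hlm
  have hbound := hN _ (n - ⌊(n : ℝ) * x⌋₊) k hNn hk₁ hk₂
  rw [Nat.add_sub_cancel' hmn] at hbound
  linarith

theorem card_far_le (h : IsBreakPointScheme p a) (hl : ∀ n, l n = a n (n + 1) - a n 0)
    (hq_def : ∀ n : ℕ, 1 ≤ n → l (n - 1) < l n →
      qseq n = (a n (n + 1) - a (n - 1) n) / (l n - l (n - 1)))
    (hq_lim : Tendsto qseq atTop (𝓝 q)) (hq : q ∈ Icc (0:ℝ) 1)
    (hL_mono : MonotoneOn L (Ici 0)) (hL_interp : ∀ n : ℕ, L n = l n)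
    (hL_fast_lt : ∀ x : ℝ, 0 < x → x < 1 → Tendsto (fun t => L (t * x) / L t) atTop (𝓝 0))
    {α : ℕ → ℕ → ℝ} (hα : ∀ n k, α n k = (a n k - a n 0) / l n) :
    ∀ ε > 0, ∀ δ > 0, ∀ᶠ n : ℕ in atTop,
      (#{k ∈ Finset.Icc 1 n | ε ≤ |α n k - (1 - q)|} : ℝ) ≤ δ * n := by
  intro ε hε δ hδ
  -- the far points lie among the `2 (n - ⌊n x⌋₊) ≤ δ n / 2 + 2` outermost indices
  set x := 1 - min (δ / 4) (1 / 2)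
  have hx : x ∈ Ioo 0 1 := ⟨by linarith [min_le_right (δ / 4) (1 / 2)],
    by linarith [lt_min (by positivity : 0 < δ / 4) one_half_pos]⟩
  filter_upwards [h.eventually_abs_div_length_sub_lt hl hq_def hq_lim hq hL_mono hL_interp hx
    (hL_fast_lt x hx.1 hx.2) hε, eventually_ge_atTop ⌈4 / δ⌉₊] with n hnear hn
  have hcard := card_filter_Icc_le_of_forall_not _ fun k hk₁ hk₂ =>
    not_le.2 (hα n k ▸ hnear k hk₁ hk₂)
  have hmn : ⌊(n : ℝ) * x⌋₊ ≤ n :=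
    Nat.floor_le_of_le (mul_le_of_le_one_right n.cast_nonneg hx.2.le)
  have hfloor := Nat.sub_one_lt_floor ((n : ℝ) * x)
  have hnδ : 4 ≤ δ * n := by
    rw [← div_le_iff₀' hδ]; exact (Nat.le_ceil _).trans (by exact_mod_cast hn)
  calc (#{k ∈ Finset.Icc 1 n | ε ≤ |α n k - (1 - q)|} : ℝ)
      ≤ ((2 * (n - ⌊(n : ℝ) * x⌋₊) : ℕ) : ℝ) := by exact_mod_cast hcard
    _ = 2 * (n - ⌊(n : ℝ) * x⌋₊) := by push_cast [hmn]; ring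
    _ ≤ δ * n := by nlinarith [min_le_left (δ / 4) (1 / 2), n.cast_nonneg (α := ℝ)]

end IsBreakPointScheme

theorem empirical_weak_limit_fast_increments_general
    (p : ℕ → ℕ → ℝ) (hp : ∀ n k, p n k ∈ Icc (0:ℝ) 1)
    (a : ℕ → ℕ → ℝ)
    (ha_anti : Antitone fun n => a n 0)
    (ha_mono : Monotone fun n => a n (n + 1))
    (ha_pos : a 0 0 < a 0 1)
    (harec : ∀ n : ℕ, 1 ≤ n → ∀ k : ℕ, 1 ≤ k → k ≤ n →
      a n k = p n k * a (n - 1) (k - 1) + (1 - p n k) * a (n - 1) k)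
    (l : ℕ → ℝ) (hl : ∀ n, l n = a n (n + 1) - a n 0)
    (qseq : ℕ → ℝ) (hq_mem : ∀ n, qseq n ∈ Icc (0:ℝ) 1)
    (hq_def : ∀ n : ℕ, 1 ≤ n → l (n - 1) < l n →
      qseq n = (a n (n + 1) - a (n - 1) n) / (l n - l (n - 1)))
    (L : ℝ → ℝ)
    (hL_mono : MonotoneOn L (Ici (0:ℝ)))
    (hL_interp : ∀ n : ℕ, L n = l n)
    (hL_fast_lt : ∀ x : ℝ, 0 < x → x < 1 →
      Tendsto (fun t : ℝ => L (t * x) / L t) atTop (nhds 0))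
    (q : ℝ) (hq_lim : Tendsto qseq atTop (nhds q))
    (α : ℕ → ℕ → ℝ) (hα : ∀ n k, α n k = (a n k - a n 0) / l n) :
    ∀ f : BoundedContinuousFunction ℝ ℝ,
      Tendsto (fun n : ℕ => ∫ x, f x ∂(empiricalMeasure α n)) atTop
        (nhds (∫ x, f x ∂(Measure.dirac (1 - q)))) := by
  have h : IsBreakPointScheme p a := ⟨hp, ha_anti, ha_mono, ha_pos, harec⟩
  have hq : q ∈ Icc (0:ℝ) 1 := isClosed_Icc.mem_of_tendsto hq_lim (Eventually.of_forall hq_mem)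
  exact tendsto_integral_empiricalMeasure_of_card_far_le
    (h.card_far_le hl hq_def hq_lim hq hL_mono hL_interp hL_fast_lt hα)

/-- **Weak convergence of the empirical distributions, fast increments case (`c = ∞`).**
If `l_n` has fast increments, `q_n → q` and `s_n/n → p̄` in probability, then
`g_n → δ_{1-q}` weakly on `[0,1]`. -/
theorem empirical_weak_limit_fast_increments
    {Ω : Type*} [MeasurableSpace Ω] (ℙ : Measure Ω) [IsProbabilityMeasure ℙ]
    (p : ℕ → ℕ → ℝ) (hp : ∀ n k, p n k ∈ Icc (0:ℝ) 1)
    (a : ℕ → ℕ → ℝ)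
    (ha_anti : Antitone fun n => a n 0)
    (ha_mono : Monotone fun n => a n (n + 1))
    (ha_pos : a 0 0 < a 0 1)
    (harec : ∀ n : ℕ, 1 ≤ n → ∀ k : ℕ, 1 ≤ k → k ≤ n →
      a n k = p n k * a (n - 1) (k - 1) + (1 - p n k) * a (n - 1) k)
    (l : ℕ → ℝ) (hl : ∀ n, l n = a n (n + 1) - a n 0)
    (qseq : ℕ → ℝ) (hq_mem : ∀ n, qseq n ∈ Icc (0:ℝ) 1)
    (hq_def : ∀ n : ℕ, 1 ≤ n → l (n - 1) < l n →
      qseq n = (a n (n + 1) - a (n - 1) n) / (l n - l (n - 1)))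
    (Y : ℕ → ℕ → Ω → ℕ) (ν ε : ℕ → Ω → ℕ)
    (hY_le : ∀ n k ω, Y n k ω ≤ 1) (hν_le : ∀ n ω, ν n ω ≤ 1) (hε_le : ∀ n ω, ε n ω ≤ 1)
    (hY_meas : ∀ n k, Measurable (Y n k)) (hν_meas : ∀ n, Measurable (ν n))
    (hε_meas : ∀ n, Measurable (ε n))
    (hY_dist : ∀ n k, ℙ {ω | Y n k ω = 1} = ENNReal.ofReal (p n k))
    (hν_dist : ∀ n, ℙ {ω | ν n ω = 1} = ENNReal.ofReal (qseq n))
    (hε_dist : ∀ n : ℕ, 1 ≤ n →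
      ℙ {ω | ε n ω = 1} = ENNReal.ofReal (1 - l (n - 1) / l n))
    (hindep : ProbabilityTheory.iIndepFun
      (m := fun _ : (ℕ × ℕ) ⊕ ℕ ⊕ ℕ => (inferInstance : MeasurableSpace ℕ))
      (Sum.elim (fun nk : ℕ × ℕ => Y nk.1 nk.2) (Sum.elim ν ε)) ℙ)
    (L : ℝ → ℝ) (hL_nonneg : ∀ x : ℝ, 0 ≤ x → 0 ≤ L x)
    (hL_mono : MonotoneOn L (Ici (0:ℝ)))
    (hL_interp : ∀ n : ℕ, L n = l n)
    (hL_fast_lt : ∀ x : ℝ, 0 < x → x < 1 →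
      Tendsto (fun t : ℝ => L (t * x) / L t) atTop (nhds 0))
    (hL_fast_gt : ∀ x : ℝ, 1 < x →
      Tendsto (fun t : ℝ => L (t * x) / L t) atTop atTop)
    (q : ℝ) (hq_lim : Tendsto qseq atTop (nhds q))
    (pbar : ℝ) (hpbar : pbar ∈ Icc (0:ℝ) 1)
    (hs : TendstoInMeasure ℙ (fun (n : ℕ) (ω : Ω) => (sProc Y ν ε n ω : ℝ) / n) atTop
      (fun _ => pbar))
    (α : ℕ → ℕ → ℝ) (hα : ∀ n k, α n k = (a n k - a n 0) / l n) :
    ∀ f : BoundedContinuousFunction ℝ ℝ,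
      Tendsto (fun n : ℕ => ∫ x, f x ∂(empiricalMeasure α n)) atTop
        (nhds (∫ x, f x ∂(Measure.dirac (1 - q)))) :=
  empirical_weak_limit_fast_increments_general p hp a ha_anti ha_mono ha_pos harec l hl qseq hq_mem
    hq_def L hL_mono hL_interp hL_fast_lt q hq_lim α hα
end

section
/- For every fixed k ∈ ℕ, (n+1)(α_{n,k+1} − α_{n,k}) → 1/(2p) as n → ∞, and (n+1)(α_{n,n−k+1} − α_{n,n−k}) → 1/(2(1−p)) as n → ∞. Equivalently, α_{n,k+1} = α_{n,k} + 1/(2p(n+1)) + o(1/(n+1)) and α_{n,n−k+1} = α_{n,n−k} + 1/(2(1−p)(n+1)) + o(1/(n+1)). -/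
/-!
Writing `t n k = (n + 1) (α n (k + 1) - α n k)` for the rescaled left spacings, the recursion
for `α` becomes `t (n + 1) 0 = 1/2 + (1 - p) t n 0` and
`t (n + 1) (k + 1) = p t n k + (1 - p) t n (k + 1)`. Column by column, `t n k - 1/(2p)` thus
obeys `x (n + 1) = (1 - p) x n + y n` with `y → 0` (by the previous column), so it tends to `0`.
The right spacings are the left spacings of the reflected break points `1 - α n (n + 1 - k)`,
which satisfy the same recursion with `p` replaced by `1 - p`.
-/

open Filter Topology

theorem tendsto_zero_of_eventually_eq_smul_add {𝕜 E : Type*} [NormedField 𝕜]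
    [SeminormedAddCommGroup E] [NormedSpace 𝕜 E] {r : 𝕜} (hr : ‖r‖ < 1) {x y : ℕ → E}
    (hxy : ∀ᶠ n in atTop, x (n + 1) = r • x n + y n) (hy : Tendsto y atTop (𝓝 0)) :
    Tendsto x atTop (𝓝 0) := by
  rw [Metric.tendsto_atTop]
  intro ε hε
  have hy_small : ∀ᶠ n in atTop, ‖y n‖ ≤ (1 - ‖r‖) * (ε / 2) :=
    hy.norm.eventually <| ge_mem_nhds <| by
      rw [norm_zero]
      have := sub_pos.2 hr
      positivity
  obtain ⟨N, hN⟩ := eventually_atTop.1 (hxy.and hy_small)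
  have hdecay : ∀ m, ‖x (N + m)‖ - ε / 2 ≤ ‖r‖ ^ m * (‖x N‖ - ε / 2) := by
    intro m
    induction m with
    | zero => simp
    | succ m ih =>
      obtain ⟨hrec, hsmall⟩ := hN (N + m) (Nat.le_add_right N m)
      have hnorm : ‖x (N + m + 1)‖ ≤ ‖r‖ * ‖x (N + m)‖ + ‖y (N + m)‖ := by
        rw [hrec, ← norm_smul]
        exact norm_add_le _ _
      calc ‖x (N + (m + 1))‖ - ε / 2 ≤ ‖r‖ * (‖x (N + m)‖ - ε / 2) := by
            rw [← add_assoc]; linarith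
        _ ≤ ‖r‖ * (‖r‖ ^ m * (‖x N‖ - ε / 2)) := by gcongr
        _ = ‖r‖ ^ (m + 1) * (‖x N‖ - ε / 2) := by ring
  have hgeom : Tendsto (fun m => ‖r‖ ^ m * (‖x N‖ - ε / 2)) atTop (𝓝 0) := by
    simpa using (tendsto_pow_atTop_nhds_zero_of_lt_one (norm_nonneg r) hr).mul_const
      (‖x N‖ - ε / 2)
  obtain ⟨M, hM⟩ := eventually_atTop.1 (hgeom.eventually (gt_mem_nhds (half_pos hε)))
  refine ⟨N + M, fun n hn => ?_⟩
  obtain ⟨m, rfl⟩ := Nat.exists_eq_add_of_le (le_trans (Nat.le_add_right N M) hn)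
  have := hdecay m
  have := hM m (by omega)
  rw [dist_zero_right]
  linarith

theorem tendsto_of_pascal_recurrence {c q : ℝ} (hq : |1 - q| < 1) {t : ℕ → ℕ → ℝ}
    (h_zero : ∀ n, t (n + 1) 0 = c + (1 - q) * t n 0)
    (h_succ : ∀ n k, k + 1 ≤ n → t (n + 1) (k + 1) = q * t n k + (1 - q) * t n (k + 1))
    (K : ℕ) : Tendsto (fun n => t n K) atTop (𝓝 (c / q)) := by
  have hq0 : q ≠ 0 := by
    rintro rfl
    simp at hq
  have hr : ‖1 - q‖ < 1 := by rwa [Real.norm_eq_abs]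
  rw [← tendsto_sub_nhds_zero_iff]
  induction K with
  | zero =>
    refine tendsto_zero_of_eventually_eq_smul_add hr (y := 0) (Eventually.of_forall fun n => ?_)
      tendsto_const_nhds
    simp only [h_zero, smul_eq_mul, Pi.zero_apply]
    field_simp
    ring
  | succ K ih =>
    refine tendsto_zero_of_eventually_eq_smul_add hr (y := fun n => q * (t n K - c / q)) ?_
      (by simpa using ih.const_mul q)
    filter_upwards [eventually_ge_atTop (K + 1)] with n hn
    rw [h_succ n K hn, smul_eq_mul]
    ring

section BreakPoints

/-- The recursion for the break points, shifted to `n + 1` and with denominators cleared. -/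
def IsBreakPointRec (p : ℝ) (α : ℕ → ℕ → ℝ) : Prop :=
  ∀ n k : ℕ, k ≤ n →
    ((n : ℝ) + 2) * α (n + 1) (k + 1) = 1 / 2 + (n + 1) * (p * α n k + (1 - p) * α n (k + 1))

variable {p : ℝ} {α : ℕ → ℕ → ℝ}

theorem isBreakPointRec_of_rec
    (hαrec : ∀ n : ℕ, 1 ≤ n → ∀ k : ℕ, 1 ≤ k → k ≤ n → α n k =
      1 / (2 * (n + 1)) + (n / (n + 1)) * (p * α (n - 1) (k - 1) + (1 - p) * α (n - 1) k)) :
    IsBreakPointRec p α := by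
  intro n k hk
  rw [hαrec (n + 1) (by omega) (k + 1) (by omega) (by omega)]
  simp only [Nat.add_sub_cancel]
  push_cast
  field_simp
  ring

theorem tendsto_left_spacing (hp : |1 - p| < 1) (hα0 : ∀ n, α n 0 = 0)
    (hrec : IsBreakPointRec p α) (k : ℕ) :
    Tendsto (fun n : ℕ => ((n : ℝ) + 1) * (α n (k + 1) - α n k)) atTop
      (𝓝 (1 / (2 * p))) := by
  rw [← div_div]
  refine tendsto_of_pascal_recurrence (t := fun n k => ((n : ℝ) + 1) * (α n (k + 1) - α n k))
    hp (fun n => ?_) (fun n k hk => ?_) k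
  · push_cast
    linear_combination
      hrec n 0 (Nat.zero_le n) - ((n : ℝ) + 2) * hα0 (n + 1) + ((n : ℝ) + 1) * hα0 n
  · push_cast
    linear_combination hrec n (k + 1) hk - hrec n k (by omega)

/-- The break points of the mirror-image fragmentation, `x ↦ -x` on the unnormalized points. -/
def reflect (α : ℕ → ℕ → ℝ) (n k : ℕ) : ℝ := 1 - α n (n + 1 - k)

theorem reflect_zero (hα1 : ∀ n, α n (n + 1) = 1) (n : ℕ) : reflect α n 0 = 0 := by
  simp [reflect, hα1]

theorem isBreakPointRec_reflect (hrec : IsBreakPointRec p α) :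
    IsBreakPointRec (1 - p) (reflect α) := by
  intro n k hk
  have h₁ : n + 1 + 1 - (k + 1) = n - k + 1 := by omega
  have h₂ : n + 1 - k = n - k + 1 := by omega
  have h₃ : n + 1 - (k + 1) = n - k := by omega
  simp only [reflect, h₁, h₂, h₃]
  linear_combination -hrec n (n - k) (Nat.sub_le n k)

theorem reflect_spacing (n k : ℕ) (hk : k ≤ n) :
    reflect α n (k + 1) - reflect α n k = α n (n - k + 1) - α n (n - k) := by
  have h₁ : n + 1 - (k + 1) = n - k := by omega
  have h₂ : n + 1 - k = n - k + 1 := by omega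
  simp only [reflect, h₁, h₂]
  ring

end BreakPoints

/-- For the normalized break points of the fragmentation with constant splitting
proportion `p` and boundary `a_{n,0} = -(n+1)/2`, `a_{n,n+1} = (n+1)/2`, the spacings near
the left end converge to `1/(2p)` and the spacings near the right end converge to
`1/(2(1-p))`, after rescaling by `n+1`. -/
theorem spacings_limit
    (p : ℝ) (hp : 0 < p) (hp1 : p < 1)
    (α : ℕ → ℕ → ℝ)
    (hα0 : ∀ n : ℕ, α n 0 = 0)
    (hα1 : ∀ n : ℕ, α n (n + 1) = 1)
    (hαrec : ∀ n : ℕ, 1 ≤ n → ∀ k : ℕ, 1 ≤ k → k ≤ n →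
      α n k = 1 / (2 * (n + 1)) + (n / (n + 1)) * (p * α (n - 1) (k - 1) + (1 - p) * α (n - 1) k)) :
    ∀ k : ℕ,
      Tendsto (fun n : ℕ => ((n : ℝ) + 1) * (α n (k + 1) - α n k)) atTop (nhds (1 / (2 * p))) ∧
      Tendsto (fun n : ℕ => ((n : ℝ) + 1) * (α n (n - k + 1) - α n (n - k))) atTop
        (nhds (1 / (2 * (1 - p)))) := by
  intro k
  have hrec := isBreakPointRec_of_rec hαrec
  have hq : |1 - p| < 1 := abs_sub_lt_iff.mpr ⟨by linarith, by linarith⟩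
  have hq_reflect : |1 - (1 - p)| < 1 := abs_sub_lt_iff.mpr ⟨by linarith, by linarith⟩
  refine ⟨tendsto_left_spacing hq hα0 hrec k, ?_⟩
  refine (tendsto_left_spacing hq_reflect (reflect_zero hα1) (isBreakPointRec_reflect hrec)
    k).congr' ?_
  filter_upwards [eventually_ge_atTop k] with n hn
  rw [reflect_spacing n k hn]
end
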